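/- For all r > 0 and θ ∈ ℝ one has the complex-potential identity conj(W(r,θ)) = iA · exp( (iA − 1)(ln r + iθ) ) · Σ_{k=0}^{M−1} g_k · e^{A θ_k} · e^{2π J(r,θ,k) A} / (1 − e^{2πA}). In other words, writing z = r e^{iθ}, the conjugate profile equals iA·D(r,θ)·z^{iA−1} where D(r,θ) := Σ_k g_k e^{A(θ_k + 2πJ(r,θ,k))}/(1−e^{2πA}). -/

import Mathlib

/-- The complex constant `A := −2ai/(a+i)`. -/
noncomputable def Aconst (a : ℝ) : ℂ := -2 * (a : ℂ) * Complex.I / ((a : ℂ) + Complex.I)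

/-- The self-similar velocity profile
`W(r,θ) := e^{iθ} Σ_{k} (2a g_k/(r(a−i))) · conj( exp((2a/(a+i)) ln r) · e^{A(θ_k−θ)} ·
e^{2πJ(r,θ,k)A}/(1−e^{2πA}) )`, where `J` is the winding-number function. -/
noncomputable def Wprof (a : ℝ) (M : ℕ) (g θs : Fin M → ℝ)
    (J : ℝ → ℝ → Fin M → ℤ) (r θ : ℝ) : ℂ :=
  Complex.exp (Complex.I * (θ : ℂ)) * ∑ k : Fin M,
    (2 * (a : ℂ) * (g k : ℂ) / ((r : ℂ) * ((a : ℂ) - Complex.I))) *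
      (starRingEnd ℂ)
        (Complex.exp ((2 * (a : ℂ) / ((a : ℂ) + Complex.I)) * (Real.log r : ℂ)) *
          Complex.exp (Aconst a * ((θs k : ℂ) - (θ : ℂ))) *
          (Complex.exp (2 * (Real.pi : ℂ) * (J r θ k : ℂ) * Aconst a) /
            (1 - Complex.exp (2 * (Real.pi : ℂ) * Aconst a))))

open Complex ComplexConjugate

lemma I_mul_Aconst (a : ℝ) : I * Aconst a = 2 * a / (a + I) := by
  have hne : (a : ℂ) + I ≠ 0 := fun h => by simpa using congrArg im h
  rw [Aconst]
  field_simp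
  linear_combination (-(a : ℂ)) * I_sq

lemma conj_Wprof (a : ℝ) (M : ℕ) (g θs : Fin M → ℝ) (J : ℝ → ℝ → Fin M → ℤ) (r θ : ℝ) :
    conj (Wprof a M g θs J r θ) = exp (-(I * θ)) * ∑ k : Fin M,
      I * Aconst a / r * g k *
        (exp (I * Aconst a * Real.log r) * exp (Aconst a * (θs k - θ)) *
          (exp (2 * Real.pi * (J r θ k) * Aconst a) / (1 - exp (2 * Real.pi * Aconst a)))) := by
  have hconj_coeff (x : ℝ) :
      conj (2 * (a : ℂ) * x / (r * ((a : ℂ) - I))) = I * Aconst a / r * x := by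
    rw [I_mul_Aconst]
    simp only [map_div₀, map_mul, map_sub, map_ofNat, conj_ofReal, conj_I, sub_neg_eq_add]
    rw [div_mul_eq_div_div]
    ring
  rw [Wprof, map_mul, ← exp_conj, map_mul, conj_I, conj_ofReal, neg_mul, map_sum]
  refine congrArg _ (Finset.sum_congr rfl fun k _ => ?_)
  rw [map_mul, conj_conj, ← I_mul_Aconst, hconj_coeff]

/-- The expansion of `z ^ (i B - 1)` for `z = r e^{iθ}`, taken along the branch `ln r + iθ`. -/
lemma exp_I_mul_sub_one_mul_log_add {r : ℝ} (hr : 0 < r) (B : ℂ) (θ : ℝ) :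
    exp ((I * B - 1) * (Real.log r + I * θ)) =
      exp (I * B * Real.log r) * exp (-(B * θ)) * exp (-(I * θ)) / r := by
  have harg : (I * B - 1) * (Real.log r + I * θ) =
      I * B * Real.log r + -(B * θ) + -(I * θ) - Real.log r := by
    linear_combination (B * θ) * I_sq
  rw [harg, exp_sub, exp_add, exp_add, ← ofReal_exp, Real.exp_log hr]

theorem Wprof_complex_potential (a : ℝ) (M : ℕ)
    (g θs : Fin M → ℝ) (J : ℝ → ℝ → Fin M → ℤ)
    (r θ : ℝ) (hr : 0 < r) :
    (starRingEnd ℂ) (Wprof a M g θs J r θ) =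
      Complex.I * Aconst a *
        Complex.exp ((Complex.I * Aconst a - 1) * ((Real.log r : ℂ) + Complex.I * (θ : ℂ))) *
        ∑ k : Fin M, (g k : ℂ) * Complex.exp (Aconst a * (θs k : ℂ)) *
          Complex.exp (2 * (Real.pi : ℂ) * (J r θ k : ℂ) * Aconst a) /
          (1 - Complex.exp (2 * (Real.pi : ℂ) * Aconst a)) := by
  rw [conj_Wprof, exp_I_mul_sub_one_mul_log_add hr, Finset.mul_sum, Finset.mul_sum]
  refine Finset.sum_congr rfl fun k _ => ?_
  rw [mul_sub, sub_eq_add_neg, exp_add]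
  ring
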